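/- For m ≥ 1, the word q₁q₂q₃ represents the book graph B_m permutationally, where on vertex set {0,1,…,m} ∪ {0′,1′,…,m′}: q₁ = 0′ 1 1′ 2 2′ ⋯ m m′ 0, q₂ = 0′ m m′ (m−1)(m−1)′ ⋯ 1 1′ 0, q₃ = 1 2 ⋯ m 0′ 0 m′ (m−1)′ ⋯ 1′. -/

import Mathlib

def Alternates {V : Type*} [DecidableEq V] (w : List V) (a b : V) : Prop :=
  (w.filter fun x => decide (x = a ∨ x = b)).Chain' (· ≠ ·)

def Represents {V : Type*} [DecidableEq V] (w : List V) (G : SimpleGraph V) : Prop :=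
  ∀ a b : V, a ≠ b → (G.Adj a b ↔ Alternates w a b)

def IsPermList {V : Type*} (p : List V) : Prop :=
  p.Nodup ∧ ∀ x : V, x ∈ p

def Precedes {V : Type*} [DecidableEq V] (p : List V) (a b : V) : Prop :=
  p.idxOf a < p.idxOf b

/-- `Sum.inl i` is the vertex `i` and `Sum.inr i` the vertex `i′`. -/
def bookGraph (m : ℕ) : SimpleGraph (Fin (m + 1) ⊕ Fin (m + 1)) :=
  SimpleGraph.fromRel fun a b =>
    (a = Sum.inl 0 ∧ ∃ i, b = Sum.inl i) ∨
    (a = Sum.inr 0 ∧ ∃ i, b = Sum.inr i) ∨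
    (∃ i, a = Sum.inl i ∧ b = Sum.inr i)

open Fin.NatCast

/-!
Since q₁, q₂, q₃ are permutations of the vertex set, two vertices alternate in q₁q₂q₃ exactly
when they occur in the same order in all three. Each qₖ (`bookWordₖ`) lists the vertices in
the order of an explicit position function `bookRankₖ`, and comparing positions is arithmetic:
q₁ and q₂ run through the pairs `i i′` in opposite directions, which separates vertices of
different pairs with `i, j ≥ 1`, while q₃ puts 1, …, m before `0′ 0` and m′, …, 1′ after them,
which puts `0, i` and `0′, i′` in the same order in all three words and reverses `0, i′` and
`0′, i`.
-/

theorem isChain_ne_flatten_map_ite {α β : Type*} {a b : β} (P : α → Prop) [DecidablePred P]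
    (hab : a ≠ b) (ps : List α) :
    ((ps.map fun p => if P p then [a, b] else [b, a]).flatten).IsChain (· ≠ ·) ↔
      (∀ p ∈ ps, P p) ∨ (∀ p ∈ ps, ¬P p) := by
  induction ps with
  | nil => simp
  | cons p ps ih =>
    cases ps with
    | nil => by_cases hp : P p <;> simp [hp, hab, hab.symm]
    | cons q ps =>
      rw [List.map_cons, List.flatten_cons] at ih ⊢
      by_cases hp : P p <;> by_cases hq : P q <;> simp_all [hab.symm]

section Permutations

variable {V : Type*} [DecidableEq V] {p : List V} {a b : V}

instance (p : List V) : DecidableRel (Precedes p) := fun a b =>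
  inferInstanceAs (Decidable (p.idxOf a < p.idxOf b))

theorem not_precedes_iff (hab : a ≠ b) (ha : a ∈ p) : ¬Precedes p a b ↔ Precedes p b a := by
  have : p.idxOf a ≠ p.idxOf b := fun h =>
    hab (by
      rw [← List.getElem_idxOf (List.idxOf_lt_length_iff.2 ha)]
      simp only [h, List.getElem_idxOf])
  unfold Precedes
  omega

theorem filter_eq_singleton_of_nodup (hp : p.Nodup) (ha : a ∉ p) (hb : b ∈ p) :
    p.filter (fun x => decide (x = a ∨ x = b)) = [b] := by
  rw [List.filter_congr (q := fun x => decide (x = b)) fun x hx => by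
      simp only [decide_eq_decide, or_iff_right_iff_imp]; rintro rfl; exact absurd hx ha,
    List.filter_eq, List.count_eq_one_of_mem hp hb, List.replicate_one]

theorem filter_eq_pair_of_nodup (hab : a ≠ b) (hp : p.Nodup) (ha : a ∈ p) (hb : b ∈ p) :
    p.filter (fun x => decide (x = a ∨ x = b)) = if Precedes p a b then [a, b] else [b, a] := by
  induction p with
  | nil => simp at ha
  | cons x t ih =>
    rw [List.nodup_cons] at hp
    by_cases hxa : x = a
    · subst hxa
      have hbt : b ∈ t := (List.mem_cons.1 hb).resolve_left (Ne.symm hab)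
      rw [List.filter_cons_of_pos (by simp), filter_eq_singleton_of_nodup hp.2 hp.1 hbt,
        if_pos (by simp [Precedes, List.idxOf_cons_ne _ hab])]
    by_cases hxb : x = b
    · subst hxb
      have hat : a ∈ t := (List.mem_cons.1 ha).resolve_left (Ne.symm hxa)
      rw [List.filter_cons_of_pos (by simp),
        if_neg (by simp [Precedes, List.idxOf_cons_ne _ hxa]),
        List.filter_congr (q := fun y => decide (y = x ∨ y = a)) (by simp [or_comm]),
        filter_eq_singleton_of_nodup hp.2 hp.1 hat]
    have hat : a ∈ t := (List.mem_cons.1 ha).resolve_left (Ne.symm hxa)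
    have hbt : b ∈ t := (List.mem_cons.1 hb).resolve_left (Ne.symm hxb)
    rw [List.filter_cons_of_neg (by simp [hxa, hxb]), ih hp.2 hat hbt]
    exact if_congr (by simp [Precedes, List.idxOf_cons_ne _ hxa, List.idxOf_cons_ne _ hxb]) rfl rfl

theorem alternates_flatten_iff {ps : List (List V)} (hab : a ≠ b)
    (hps : ∀ p ∈ ps, p.Nodup ∧ a ∈ p ∧ b ∈ p) :
    Alternates ps.flatten a b ↔ (∀ p ∈ ps, Precedes p a b) ∨ (∀ p ∈ ps, Precedes p b a) := by
  have hrev : ∀ p ∈ ps, (¬Precedes p a b ↔ Precedes p b a) := fun p hp =>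
    not_precedes_iff hab (hps p hp).2.1
  rw [Alternates, List.filter_flatten,
    List.map_congr_left fun p hp =>
      filter_eq_pair_of_nodup hab (hps p hp).1 (hps p hp).2.1 (hps p hp).2.2,
    List.Chain', isChain_ne_flatten_map_ite _ hab]
  constructor <;> rintro (h | h) <;> simp_all

theorem represents_flatten_iff {ps : List (List V)} {G : SimpleGraph V}
    (hps : ∀ p ∈ ps, IsPermList p) :
    Represents ps.flatten G ↔ ∀ a b, a ≠ b →
      (G.Adj a b ↔ (∀ p ∈ ps, Precedes p a b) ∨ (∀ p ∈ ps, Precedes p b a)) := by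
  refine forall₂_congr fun a b => imp_congr_right fun hab => iff_congr Iff.rfl ?_
  exact alternates_flatten_iff hab fun p hp => ⟨(hps p hp).1, (hps p hp).2 a, (hps p hp).2 b⟩

theorem idxOf_eq_of_map_eq_range {r : V → ℕ} {n : ℕ} (h : p.map r = List.range n) {x : V}
    (hx : x ∈ p) : p.idxOf x = r x := by
  have hlt := List.idxOf_lt_length_iff.2 hx
  have hn : p.length = n := by simpa using congrArg List.length h
  have := congrArg (·[p.idxOf x]?) h
  simp only [List.getElem?_map, List.getElem?_eq_getElem hlt, List.getElem_idxOf,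
    List.getElem?_range (hn ▸ hlt), Option.map_some, Option.some.injEq] at this
  exact this.symm

theorem isPermList_of_map_eq_range [Fintype V] {r : V → ℕ}
    (h : p.map r = List.range (Fintype.card V)) : IsPermList p := by
  have hp : p.Nodup := List.Nodup.of_map r (h ▸ List.nodup_range)
  have hcard : p.toFinset.card = Fintype.card V := by
    simpa [List.toFinset_card_of_nodup hp] using congrArg List.length h
  exact ⟨hp, fun x => List.mem_toFinset.1 (Finset.eq_univ_of_card _ hcard ▸ Finset.mem_univ x)⟩

theorem IsPermList.precedes_iff_of_map_eq_range {r : V → ℕ} {n : ℕ} (hp : IsPermList p)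
    (h : p.map r = List.range n) : Precedes p a b ↔ r a < r b := by
  rw [Precedes, idxOf_eq_of_map_eq_range h (hp.2 a), idxOf_eq_of_map_eq_range h (hp.2 b)]

end Permutations

theorem map_flatMap_pair_eq_range' {α : Type*} (r : α → ℕ) (f g : ℕ → α) (s n : ℕ)
    (hf : ∀ k < n, r (f k) = s + 2 * k) (hg : ∀ k < n, r (g k) = s + 2 * k + 1) :
    ((List.range n).flatMap fun k => [f k, g k]).map r = List.range' s (2 * n) := by
  induction n with
  | zero => rfl
  | succ n ih =>
    rw [List.range_succ, List.flatMap_append, List.map_append,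
      ih (fun k hk => hf k (by omega)) (fun k hk => hg k (by omega)),
      show 2 * (n + 1) = 2 * n + 2 by ring, ← List.range'_append]
    simp [hf n n.lt_succ_self, hg n n.lt_succ_self, List.range'_succ]

theorem range_add_two_eq_cons (n : ℕ) :
    List.range (n + 2) = 0 :: (List.range' 1 n ++ [n + 1]) := by
  rw [List.range_eq_range', List.range'_concat, List.range'_succ]
  simp

def bookWord₁ (m : ℕ) : List (Fin (m + 1) ⊕ Fin (m + 1)) :=
  Sum.inr 0 :: (((List.range m).flatMap fun k =>
    [Sum.inl ((k + 1 : ℕ) : Fin (m + 1)), Sum.inr ((k + 1 : ℕ) : Fin (m + 1))]) ++ [Sum.inl 0])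

def bookWord₂ (m : ℕ) : List (Fin (m + 1) ⊕ Fin (m + 1)) :=
  Sum.inr 0 :: (((List.range m).flatMap fun k =>
    [Sum.inl ((m - k : ℕ) : Fin (m + 1)), Sum.inr ((m - k : ℕ) : Fin (m + 1))]) ++ [Sum.inl 0])

def bookWord₃ (m : ℕ) : List (Fin (m + 1) ⊕ Fin (m + 1)) :=
  ((List.range m).map fun k => (Sum.inl ((k + 1 : ℕ) : Fin (m + 1)) :
      Fin (m + 1) ⊕ Fin (m + 1))) ++
    [Sum.inr 0, Sum.inl 0] ++
    ((List.range m).map fun k => Sum.inr ((m - k : ℕ) : Fin (m + 1)))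

def bookRank₁ (m : ℕ) : Fin (m + 1) ⊕ Fin (m + 1) → ℕ
  | .inl i => if i = 0 then 2 * m + 1 else 2 * i - 1
  | .inr i => 2 * i

def bookRank₂ (m : ℕ) : Fin (m + 1) ⊕ Fin (m + 1) → ℕ
  | .inl i => if i = 0 then 2 * m + 1 else 2 * (m - i) + 1
  | .inr i => if i = 0 then 0 else 2 * (m - i) + 2

def bookRank₃ (m : ℕ) : Fin (m + 1) ⊕ Fin (m + 1) → ℕ
  | .inl i => if i = 0 then m + 1 else i - 1
  | .inr i => if i = 0 then m else 2 * m + 2 - i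

section Book

variable {m : ℕ}

theorem map_bookRank₁_bookWord₁ : (bookWord₁ m).map (bookRank₁ m) = List.range (2 * m + 2) := by
  rw [bookWord₁, List.map_cons, List.map_append,
    map_flatMap_pair_eq_range' _ _ _ 1 m
      (fun k hk => by simp [bookRank₁, Fin.natCast_eq_mk (show k + 1 < m + 1 by omega)]; omega)
      (fun k hk => by simp [bookRank₁, Fin.natCast_eq_mk (show k + 1 < m + 1 by omega)]; ring),
    range_add_two_eq_cons]
  simp [bookRank₁]

theorem map_bookRank₂_bookWord₂ : (bookWord₂ m).map (bookRank₂ m) = List.range (2 * m + 2) := by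
  rw [bookWord₂, List.map_cons, List.map_append,
    map_flatMap_pair_eq_range' _ _ _ 1 m
      (fun k hk => by
        simp [bookRank₂, Fin.natCast_eq_mk (show m - k < m + 1 by omega), show m - k ≠ 0 by omega]
        omega)
      (fun k hk => by
        simp [bookRank₂, Fin.natCast_eq_mk (show m - k < m + 1 by omega), show m - k ≠ 0 by omega]
        omega),
    range_add_two_eq_cons]
  simp [bookRank₂]

theorem map_bookRank₃_bookWord₃ : (bookWord₃ m).map (bookRank₃ m) = List.range (2 * m + 2) := by
  have hleft : ∀ k ∈ List.range m, bookRank₃ m (.inl ((k + 1 : ℕ) : Fin (m + 1))) = 0 + k :=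
    fun k hk => by
      rw [List.mem_range] at hk
      simp [bookRank₃, Fin.natCast_eq_mk (show k + 1 < m + 1 by omega)]
  have hright : ∀ k ∈ List.range m, bookRank₃ m (.inr ((m - k : ℕ) : Fin (m + 1))) = m + 2 + k :=
    fun k hk => by
      rw [List.mem_range] at hk
      simp [bookRank₃, Fin.natCast_eq_mk (show m - k < m + 1 by omega), show m - k ≠ 0 by omega]
      omega
  simp only [bookWord₃, List.map_append, List.map_map, Function.comp_def]
  rw [List.map_congr_left hleft, List.map_congr_left hright, ← List.range'_eq_map_range,
    ← List.range'_eq_map_range, List.range_eq_range', show 2 * m + 2 = m + (2 + m) by ring,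
    ← List.range'_append, ← List.range'_append]
  simp [bookRank₃, List.range'_succ]

theorem bookGraph_adj_inl_inl {i j : Fin (m + 1)} :
    (bookGraph m).Adj (.inl i) (.inl j) ↔ i ≠ j ∧ (i = 0 ∨ j = 0) := by
  simp [bookGraph, and_or_left]

theorem bookGraph_adj_inr_inr {i j : Fin (m + 1)} :
    (bookGraph m).Adj (.inr i) (.inr j) ↔ i ≠ j ∧ (i = 0 ∨ j = 0) := by
  simp [bookGraph, and_or_left]

theorem bookGraph_adj_inl_inr {i j : Fin (m + 1)} :
    (bookGraph m).Adj (.inl i) (.inr j) ↔ i = j := by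
  simpa [bookGraph] using eq_comm

theorem bookGraph_adj_inr_inl {i j : Fin (m + 1)} :
    (bookGraph m).Adj (.inr i) (.inl j) ↔ i = j := by
  simp [bookGraph]

theorem bookGraph_adj_iff_ranks {a b : Fin (m + 1) ⊕ Fin (m + 1)} (hab : a ≠ b) :
    (bookGraph m).Adj a b ↔
      (bookRank₁ m a < bookRank₁ m b ∧ bookRank₂ m a < bookRank₂ m b ∧
          bookRank₃ m a < bookRank₃ m b) ∨
        (bookRank₁ m b < bookRank₁ m a ∧ bookRank₂ m b < bookRank₂ m a ∧
          bookRank₃ m b < bookRank₃ m a) := by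
  rcases a with i | i <;> rcases b with j | j <;>
    simp only [bookGraph_adj_inl_inl, bookGraph_adj_inr_inr, bookGraph_adj_inl_inr,
      bookGraph_adj_inr_inl, bookRank₁, bookRank₂, bookRank₃, ne_eq, Sum.inl.injEq, Sum.inr.injEq,
      Fin.ext_iff, Fin.val_zero] at hab ⊢ <;>
    have := i.isLt <;> have := j.isLt <;> split_ifs <;> omega

end Book

theorem book_word_represents_general (m : ℕ) :
    Represents
      ((Sum.inr 0 ::
        (((List.range m).flatMap fun k =>
          [Sum.inl ((k + 1 : ℕ) : Fin (m + 1)), Sum.inr ((k + 1 : ℕ) : Fin (m + 1))]) ++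
         [Sum.inl 0])) ++
       (Sum.inr 0 ::
        (((List.range m).flatMap fun k =>
          [Sum.inl ((m - k : ℕ) : Fin (m + 1)), Sum.inr ((m - k : ℕ) : Fin (m + 1))]) ++
         [Sum.inl 0])) ++
       (((List.range m).map fun k => (Sum.inl ((k + 1 : ℕ) : Fin (m + 1)) :
          Fin (m + 1) ⊕ Fin (m + 1))) ++
        [Sum.inr 0, Sum.inl 0] ++
        ((List.range m).map fun k => Sum.inr ((m - k : ℕ) : Fin (m + 1)))))
      (bookGraph m) := by
  have hcard : Fintype.card (Fin (m + 1) ⊕ Fin (m + 1)) = 2 * m + 2 := by simp; ring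
  have hperm₁ := isPermList_of_map_eq_range (hcard ▸ map_bookRank₁_bookWord₁ (m := m))
  have hperm₂ := isPermList_of_map_eq_range (hcard ▸ map_bookRank₂_bookWord₂ (m := m))
  have hperm₃ := isPermList_of_map_eq_range (hcard ▸ map_bookRank₃_bookWord₃ (m := m))
  change Represents (bookWord₁ m ++ bookWord₂ m ++ bookWord₃ m) (bookGraph m)
  rw [show bookWord₁ m ++ bookWord₂ m ++ bookWord₃ m =
      [bookWord₁ m, bookWord₂ m, bookWord₃ m].flatten by simp,
    represents_flatten_iff (by simp [hperm₁, hperm₂, hperm₃])]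
  intro a b hab
  simp only [List.forall_mem_cons, List.not_mem_nil, IsEmpty.forall_iff, forall_const, and_true,
    hperm₁.precedes_iff_of_map_eq_range map_bookRank₁_bookWord₁,
    hperm₂.precedes_iff_of_map_eq_range map_bookRank₂_bookWord₂,
    hperm₃.precedes_iff_of_map_eq_range map_bookRank₃_bookWord₃]
  exact bookGraph_adj_iff_ranks hab

/-- For `m ≥ 1`, the word `q₁q₂q₃` represents the book graph `B_m` permutationally, where
`q₁ = 0′ 1 1′ 2 2′ ⋯ m m′ 0`, `q₂ = 0′ m m′ (m−1)(m−1)′ ⋯ 1 1′ 0`, and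
`q₃ = 1 2 ⋯ m 0′ 0 m′ (m−1)′ ⋯ 1′`. -/
theorem book_word_represents (m : ℕ) (hm : 1 ≤ m) :
    Represents
      ((Sum.inr 0 ::
        (((List.range m).flatMap fun k =>
          [Sum.inl ((k + 1 : ℕ) : Fin (m + 1)), Sum.inr ((k + 1 : ℕ) : Fin (m + 1))]) ++
         [Sum.inl 0])) ++
       (Sum.inr 0 ::
        (((List.range m).flatMap fun k =>
          [Sum.inl ((m - k : ℕ) : Fin (m + 1)), Sum.inr ((m - k : ℕ) : Fin (m + 1))]) ++
         [Sum.inl 0])) ++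
       (((List.range m).map fun k => (Sum.inl ((k + 1 : ℕ) : Fin (m + 1)) :
          Fin (m + 1) ⊕ Fin (m + 1))) ++
        [Sum.inr 0, Sum.inl 0] ++
        ((List.range m).map fun k => Sum.inr ((m - k : ℕ) : Fin (m + 1)))))
      (bookGraph m) :=
  book_word_represents_general m
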